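/- Let k be a weight of class 𝒦^λ and for each δ > 0 let k_δ be the associated weight. Then M_{k_δ} converges to the constant function 1 uniformly on compact subsets of ℝⁿ as δ → 0⁺: for every compact set K ⊂ ℝⁿ and every ε > 0 there exists δ₀ > 0 such that for all 0 < δ < δ₀ and all ξ ∈ K one has 1 ≤ M_{k_δ}(ξ) ≤ 1 + ε. -/

import Mathlib

/-!
Translating the argument of `k_δ` by `ξ` changes the weight `exp (-δ|ζ|)` by at most the factor
`exp (δ|ξ|)`, so `M_{k_δ}(ξ) ≤ exp (δ|ξ|)`, which is close to `1` uniformly on compact sets as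
`δ → 0`. Conversely `k_δ` inherits the class condition from `k`, so it decays at most
subexponentially; if `M_{k_δ}(ξ) = r < 1`, then `k_δ (m • ξ) ≤ r ^ m k_δ 0` would decay
exponentially along the ray through `ξ`.
-/

open Real Filter Set

theorem eventually_mul_rpow_lt_mul {a : ℝ} (ha : a < 1) (c : ℝ) {δ : ℝ} (hδ : 0 < δ) :
    ∀ᶠ t in atTop, c * t ^ a < δ * t := by
  have hdecay : Tendsto (fun t : ℝ => c * t ^ (a - 1)) atTop (nhds 0) := by
    simpa using (tendsto_rpow_neg_atTop (by linarith : 0 < 1 - a)).const_mul c |>.congr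
      (fun t => by rw [neg_sub])
  filter_upwards [hdecay.eventually (gt_mem_nhds hδ), eventually_gt_atTop 0] with t ht ht0
  calc c * t ^ a = c * t ^ (a - 1) * t := by rw [mul_assoc, ← rpow_add_one ht0.ne']; ring_nf
    _ < δ * t := by gcongr

theorem exists_mul_rpow_le_mul_add {a c δ : ℝ} (ha0 : 0 ≤ a) (ha : a < 1) (hc : 0 ≤ c)
    (hδ : 0 < δ) : ∃ C, ∀ t, 0 ≤ t → c * t ^ a ≤ δ * t + C := by
  obtain ⟨T, hT⟩ := (eventually_mul_rpow_lt_mul ha c hδ).exists_forall_of_atTop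
  refine ⟨c * max T 0 ^ a, fun t ht => ?_⟩
  rcases le_total t (max T 0) with htT | hTt
  · have : c * t ^ a ≤ c * max T 0 ^ a := by gcongr
    nlinarith
  · have := hT t (le_of_max_le_left hTt)
    have : 0 ≤ c * max T 0 ^ a := by positivity
    linarith

section

variable {E : Type*} [NormedAddCommGroup E]

/-- The class `𝒦^λ` of the paper, with `λ = lam`. -/
structure IsSubexpWeight (σ lam : ℝ) (k : E → ℝ) : Prop where
  pos : ∀ ξ, 0 < k ξ
  le_exp_mul : ∀ ξ η, k (ξ + η) ≤ exp (lam * ‖ξ‖ ^ (1 / σ)) * k η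

/-- The weight `k_δ(ξ) = sup_η exp(-δ|η|) k(ξ - η)`. -/
noncomputable def supConvExp (δ : ℝ) (k : E → ℝ) (ξ : E) : ℝ :=
  ⨆ ζ, exp (-δ * ‖ζ‖) * k (ξ - ζ)

/-- `M_k(ξ) = sup_η k(ξ + η) / k(η)`. -/
noncomputable def translationRatio (k : E → ℝ) (ξ : E) : ℝ :=
  ⨆ η, k (ξ + η) / k η

namespace IsSubexpWeight

variable {σ lam δ : ℝ} {k : E → ℝ}

theorem le_exp_mul_zero (hk : IsSubexpWeight σ lam k) (x : E) :
    k 0 ≤ exp (lam * ‖x‖ ^ (1 / σ)) * k x := by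
  simpa using hk.le_exp_mul (-x) x

theorem bddAbove_supConvExp (hk : IsSubexpWeight σ lam k) (hσ : 1 < σ) (hlam : 0 ≤ lam)
    (hδ : 0 < δ) (x : E) :
    BddAbove (range fun ζ => exp (-δ * ‖ζ‖) * k (x - ζ)) := by
  have hσ0 : 0 < σ := one_pos.trans hσ
  obtain ⟨C, hC⟩ := exists_mul_rpow_le_mul_add (by positivity) ((div_lt_one hσ0).2 hσ) hlam hδ
  refine ⟨exp (lam * ‖x‖ ^ (1 / σ) + C) * k 0, ?_⟩
  rintro _ ⟨ζ, rfl⟩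
  have hsub : ‖x - ζ‖ ^ (1 / σ) ≤ ‖x‖ ^ (1 / σ) + ‖ζ‖ ^ (1 / σ) :=
    calc ‖x - ζ‖ ^ (1 / σ) ≤ (‖x‖ + ‖ζ‖) ^ (1 / σ) := by gcongr; exact norm_sub_le x ζ
      _ ≤ ‖x‖ ^ (1 / σ) + ‖ζ‖ ^ (1 / σ) :=
        rpow_add_le_add_rpow (norm_nonneg _) (norm_nonneg _) (by positivity)
          ((div_le_one hσ0).2 hσ.le)
  have hexp : -δ * ‖ζ‖ + lam * ‖x - ζ‖ ^ (1 / σ) ≤ lam * ‖x‖ ^ (1 / σ) + C := by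
    nlinarith [hC ‖ζ‖ (norm_nonneg ζ)]
  calc exp (-δ * ‖ζ‖) * k (x - ζ)
      ≤ exp (-δ * ‖ζ‖) * (exp (lam * ‖x - ζ‖ ^ (1 / σ)) * k 0) := by
        gcongr; simpa using hk.le_exp_mul (x - ζ) 0
    _ = exp (-δ * ‖ζ‖ + lam * ‖x - ζ‖ ^ (1 / σ)) * k 0 := by rw [exp_add]; ring
    _ ≤ exp (lam * ‖x‖ ^ (1 / σ) + C) * k 0 := by gcongr; exact (hk.pos 0).le

section

variable (hk : IsSubexpWeight σ lam k) (hσ : 1 < σ) (hlam : 0 ≤ lam) (hδ : 0 < δ)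
include hk hσ hlam hδ

theorem le_supConvExp (x : E) : k x ≤ supConvExp δ k x := by
  simpa [supConvExp] using le_ciSup (hk.bddAbove_supConvExp hσ hlam hδ x) 0

theorem supConvExp_add_le (ξ η : E) :
    supConvExp δ k (ξ + η) ≤ exp (δ * ‖ξ‖) * supConvExp δ k η :=
  ciSup_le fun ζ =>
    calc exp (-δ * ‖ζ‖) * k (ξ + η - ζ)
        ≤ exp (δ * ‖ξ‖) * (exp (-δ * ‖ζ - ξ‖) * k (η - (ζ - ξ))) := by
          rw [← mul_assoc, ← exp_add, show ξ + η - ζ = η - (ζ - ξ) by abel]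
          gcongr
          · exact (hk.pos _).le
          · nlinarith [norm_sub_le ζ ξ]
      _ ≤ exp (δ * ‖ξ‖) * supConvExp δ k η := by
          gcongr; exact le_ciSup (hk.bddAbove_supConvExp hσ hlam hδ η) (ζ - ξ)

theorem supConvExp : IsSubexpWeight σ lam (supConvExp δ k) where
  pos x := (hk.pos x).trans_le (hk.le_supConvExp hσ hlam hδ x)
  le_exp_mul ξ η := ciSup_le fun ζ =>
    calc exp (-δ * ‖ζ‖) * k (ξ + η - ζ)
        ≤ exp (-δ * ‖ζ‖) * (exp (lam * ‖ξ‖ ^ (1 / σ)) * k (η - ζ)) := by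
          gcongr; rw [add_sub_assoc]; exact hk.le_exp_mul ξ (η - ζ)
      _ = exp (lam * ‖ξ‖ ^ (1 / σ)) * (exp (-δ * ‖ζ‖) * k (η - ζ)) := by ring
      _ ≤ exp (lam * ‖ξ‖ ^ (1 / σ)) * _root_.supConvExp δ k η := by
          gcongr; exact le_ciSup (hk.bddAbove_supConvExp hσ hlam hδ η) ζ

end

/-- Iterating the contraction, `k (m • ξ) ≤ r ^ m * k 0` would decay exponentially, whereas the
class condition only allows decay like `exp (-lam * (m * ‖ξ‖) ^ (1 / σ))`. -/
theorem one_le_of_forall_add_le (hk : IsSubexpWeight σ lam k) (hσ : 1 < σ) (hlam : 0 ≤ lam)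
    {ξ : E} {r : ℝ} (hr : ∀ η, k (ξ + η) ≤ r * k η) : 1 ≤ r := by
  by_contra! hr1
  have hr0 : 0 < r := pos_of_mul_pos_left ((hk.pos _).trans_le (hr 0)) (hk.pos 0).le
  have hdecay : ∀ m : ℕ, k (m • ξ) ≤ r ^ m * k 0 := by
    intro m
    induction m with
    | zero => simp
    | succ m ih =>
      calc k ((m + 1) • ξ) ≤ r * k (m • ξ) := by rw [succ_nsmul']; exact hr _
        _ ≤ r * (r ^ m * k 0) := by gcongr
        _ = r ^ (m + 1) * k 0 := by ring
  have hσ0 : 0 < σ := one_pos.trans hσ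
  obtain ⟨m, hm⟩ := ((eventually_mul_rpow_lt_mul ((div_lt_one hσ0).2 hσ)
    (lam * ‖ξ‖ ^ (1 / σ)) (neg_pos.2 (log_neg hr0 hr1))).natCast_atTop).exists
  have hgrowth : 1 ≤ exp (lam * ‖ξ‖ ^ (1 / σ) * (m : ℝ) ^ (1 / σ)) * r ^ m := by
    refine le_of_mul_le_mul_right ?_ (hk.pos 0)
    calc 1 * k 0 ≤ exp (lam * ‖m • ξ‖ ^ (1 / σ)) * k (m • ξ) := by
          simpa using hk.le_exp_mul_zero (m • ξ)
      _ ≤ exp (lam * ((m : ℝ) * ‖ξ‖) ^ (1 / σ)) * (r ^ m * k 0) := by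
          gcongr
          · exact (hk.pos _).le
          · exact norm_nsmul_le
          · exact hdecay m
      _ = exp (lam * ‖ξ‖ ^ (1 / σ) * (m : ℝ) ^ (1 / σ)) * r ^ m * k 0 := by
          rw [mul_rpow (Nat.cast_nonneg m) (norm_nonneg ξ)]; ring_nf
  have := log_nonneg hgrowth
  rw [log_mul (exp_pos _).ne' (pow_pos hr0 m).ne', log_exp, log_pow] at this
  linarith

theorem one_le_translationRatio (hk : IsSubexpWeight σ lam k) (hσ : 1 < σ) (hlam : 0 ≤ lam)
    {ξ : E} {B : ℝ} (hB : ∀ η, k (ξ + η) ≤ B * k η) : 1 ≤ translationRatio k ξ := by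
  have hbdd : BddAbove (range fun η => k (ξ + η) / k η) := by
    refine ⟨B, ?_⟩
    rintro _ ⟨η, rfl⟩
    exact (div_le_iff₀ (hk.pos η)).2 (hB η)
  exact hk.one_le_of_forall_add_le hσ hlam fun η => (div_le_iff₀ (hk.pos η)).1 (le_ciSup hbdd η)

end IsSubexpWeight

theorem translationRatio_le {k : E → ℝ} {ξ : E} {B : ℝ} (hk : ∀ x, 0 < k x)
    (h : ∀ η, k (ξ + η) ≤ B * k η) : translationRatio k ξ ≤ B :=
  ciSup_le fun η => (div_le_iff₀ (hk η)).2 (h η)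

end

theorem stmt_6_general (n : ℕ) (σ lam : ℝ) (hσ : 1 < σ) (hlam : 0 < lam)
    (k : EuclideanSpace ℝ (Fin n) → ℝ)
    (hkpos : ∀ ξ, 0 < k ξ)
    (hk : ∀ ξ η, k (ξ + η) ≤ Real.exp (lam * ‖ξ‖ ^ (1 / σ)) * k η) :
    ∀ K : Set (EuclideanSpace ℝ (Fin n)), IsCompact K → ∀ ε : ℝ, 0 < ε →
      ∃ δ₀ : ℝ, 0 < δ₀ ∧ ∀ δ : ℝ, 0 < δ → δ < δ₀ → ∀ ξ ∈ K,
        1 ≤ (⨆ η, (⨆ ζ, Real.exp (-δ * ‖ζ‖) * k (ξ + η - ζ)) /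
                (⨆ ζ, Real.exp (-δ * ‖ζ‖) * k (η - ζ))) ∧
        (⨆ η, (⨆ ζ, Real.exp (-δ * ‖ζ‖) * k (ξ + η - ζ)) /
                (⨆ ζ, Real.exp (-δ * ‖ζ‖) * k (η - ζ))) ≤ 1 + ε := by
  intro K hK ε hε
  have hw : IsSubexpWeight σ lam k := ⟨hkpos, hk⟩
  obtain ⟨R, hR0, hR⟩ := hK.isBounded.exists_pos_norm_le
  refine ⟨log (1 + ε) / R, div_pos (log_pos (by linarith)) hR0, fun δ hδ hδ₀ ξ hξ => ?_⟩
  have hwδ := hw.supConvExp hσ hlam.le hδ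
  have hshift := hw.supConvExp_add_le hσ hlam.le hδ ξ
  change 1 ≤ translationRatio (supConvExp δ k) ξ ∧ translationRatio (supConvExp δ k) ξ ≤ 1 + ε
  refine ⟨hwδ.one_le_translationRatio hσ hlam.le hshift,
    (translationRatio_le hwδ.pos hshift).trans ?_⟩
  calc exp (δ * ‖ξ‖) ≤ exp (log (1 + ε)) := by
        gcongr
        calc δ * ‖ξ‖ ≤ log (1 + ε) / R * R :=
              mul_le_mul hδ₀.le (hR ξ hξ) (norm_nonneg ξ) (hδ.le.trans hδ₀.le)
          _ = log (1 + ε) := div_mul_cancel₀ _ hR0.ne'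
    _ = 1 + ε := exp_log (by linarith)

theorem stmt_6 (n : ℕ) (hn : 1 ≤ n) (σ lam : ℝ) (hσ : 1 < σ) (hlam : 0 < lam)
    (k : EuclideanSpace ℝ (Fin n) → ℝ)
    (hkpos : ∀ ξ, 0 < k ξ)
    (hk : ∀ ξ η, k (ξ + η) ≤ Real.exp (lam * ‖ξ‖ ^ (1 / σ)) * k η) :
    ∀ K : Set (EuclideanSpace ℝ (Fin n)), IsCompact K → ∀ ε : ℝ, 0 < ε →
      ∃ δ₀ : ℝ, 0 < δ₀ ∧ ∀ δ : ℝ, 0 < δ → δ < δ₀ → ∀ ξ ∈ K,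
        1 ≤ (⨆ η, (⨆ ζ, Real.exp (-δ * ‖ζ‖) * k (ξ + η - ζ)) /
                (⨆ ζ, Real.exp (-δ * ‖ζ‖) * k (η - ζ))) ∧
        (⨆ η, (⨆ ζ, Real.exp (-δ * ‖ζ‖) * k (ξ + η - ζ)) /
                (⨆ ζ, Real.exp (-δ * ‖ζ‖) * k (η - ζ))) ≤ 1 + ε :=
  stmt_6_general n σ lam hσ hlam k hkpos hk
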